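/- arXiv:1909.01778 — 5 statements merged into one kernel-verified Lean document; each statement's English description precedes it below -/
import Mathlib

section
/- Fix u ∈ ℝ^m. If there exists x₀ ∈ ℝ^n with f(x₀,u) = 0, then b := A x₀ ∈ ℝ^{2q} satisfies: P(b) = {x₀} (in particular P(b) is nonempty), and for every i ∈ {1,…,2q} and every x ∈ P(b), Kᵢ g(Cx, u) ≤ bᵢ (indeed K g(Cx₀, u) = A x₀ = b). -/
open Matrix

/-- Necessity direction of Lemma 3.1: if `f(x₀,u) = 0`, then `b := A x₀` satisfies
`P(b) = {x₀}`, `K g(Cx₀,u) = A x₀ = b`, and the self-mapping condition holds on `P(b)`. -/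
theorem solvability_necessary {n m p q : ℕ}
    (hn : 0 < n) (hm : 0 < m) (hp : 0 < p) (hq : 0 < q)
    (M : Matrix (Fin n) (Fin p) ℝ) (C : Matrix (Fin q) (Fin n) ℝ)
    (Λ : Matrix (Fin p) (Fin q) ℝ)
    (hC : C.rank = n) (hinv : IsUnit (M * Λ * C).det)
    (ψ : (Fin q → ℝ) → (Fin m → ℝ) → (Fin p → ℝ))
    (hψ : Continuous fun zu : (Fin q → ℝ) × (Fin m → ℝ) => ψ zu.1 zu.2)
    (f : (Fin n → ℝ) → (Fin m → ℝ) → (Fin n → ℝ))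
    (hf : ∀ x u, f x u = M.mulVec (ψ (C.mulVec x) u))
    (g : (Fin q → ℝ) → (Fin m → ℝ) → (Fin p → ℝ))
    (hg : ∀ z u, g z u = ψ z u - Λ.mulVec z)
    (A : Matrix (Fin q ⊕ Fin q) (Fin n) ℝ) (hA : A = Matrix.fromRows C (-C))
    (K : Matrix (Fin q ⊕ Fin q) (Fin p) ℝ) (hK : K = -(A * (M * Λ * C)⁻¹ * M))
    (u : Fin m → ℝ) (x0 : Fin n → ℝ) (hx0 : f x0 u = 0) :
    {x : Fin n → ℝ | ∀ i, A.mulVec x i ≤ A.mulVec x0 i} = {x0} ∧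
    K.mulVec (g (C.mulVec x0) u) = A.mulVec x0 ∧
    ∀ i, ∀ x ∈ {x : Fin n → ℝ | ∀ i, A.mulVec x i ≤ A.mulVec x0 i},
      K.mulVec (g (C.mulVec x) u) i ≤ A.mulVec x0 i := by
  have hψ0 : M.mulVec (ψ (C.mulVec x0) u) = 0 := by rw [← hf]; exact hx0
  have hNinv : (M * Λ * C)⁻¹ * (M * Λ * C) = 1 := Matrix.nonsing_inv_mul _ hinv
  have hCinj : ∀ x y : Fin n → ℝ, C.mulVec x = C.mulVec y → x = y := by
    intro x y hxy
    have h1 : (M * Λ * C).mulVec x = (M * Λ * C).mulVec y := by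
      rw [← Matrix.mulVec_mulVec, ← Matrix.mulVec_mulVec, ← Matrix.mulVec_mulVec,
        ← Matrix.mulVec_mulVec, hxy]
    have h2 := congrArg (fun v => (M * Λ * C)⁻¹.mulVec v) h1
    simpa [Matrix.mulVec_mulVec, hNinv, Matrix.one_mulVec] using h2
  have hset : {x : Fin n → ℝ | ∀ i, A.mulVec x i ≤ A.mulVec x0 i} = {x0} := by
    ext x
    simp only [Set.mem_setOf_eq, Set.mem_singleton_iff]
    constructor
    · intro h
      refine hCinj x x0 ?_
      funext j
      have h1 := h (Sum.inl j)
      have h2 := h (Sum.inr j)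
      rw [hA, Matrix.fromRows_mulVec, Matrix.fromRows_mulVec] at h1 h2
      simp only [Sum.elim_inl, Sum.elim_inr, Matrix.neg_mulVec, Pi.neg_apply,
        neg_le_neg_iff] at h1 h2
      linarith
    · rintro rfl i; exact le_refl _
  have hKg : K.mulVec (g (C.mulVec x0) u) = A.mulVec x0 := by
    rw [hg, hK, Matrix.neg_mulVec, Matrix.mulVec_sub]
    have h1 : (A * (M * Λ * C)⁻¹ * M).mulVec (ψ (C.mulVec x0) u) = 0 := by
      rw [← Matrix.mulVec_mulVec, hψ0, Matrix.mulVec_zero]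
    have h2 : (A * (M * Λ * C)⁻¹ * M).mulVec (Λ.mulVec (C.mulVec x0))
        = A.mulVec x0 := by
      rw [Matrix.mulVec_mulVec, Matrix.mulVec_mulVec]
      have h3 : A * (M * Λ * C)⁻¹ * M * Λ * C = A * ((M * Λ * C)⁻¹ * (M * Λ * C)) := by
        simp only [Matrix.mul_assoc]
      rw [h3, hNinv, Matrix.mul_one]
    rw [h1, h2, zero_sub, neg_neg]
  refine ⟨hset, hKg, ?_⟩
  intro i x hx
  rw [hset] at hx
  rw [hx, hKg]
end

section
/- Suppose x⁰ ∈ ℝ^n and u⁰ ∈ ℝ^m satisfy f(x⁰,u⁰) = 0 and h(x⁰,u⁰) ≤ 0, and set b⁰ := A x⁰. Then P(b⁰) = {x⁰}, K g(Cx⁰, u⁰) = b⁰, and L ψ(Cx⁰, u⁰) ≤ 0. Consequently, the choices b = b⁰, Gᵘ = Gˡ = g(Cx⁰,u⁰), Ψᵘ = Ψˡ = ψ(Cx⁰,u⁰) satisfy K⁺Gᵘ + K⁻Gˡ ≤ b and L⁺Ψᵘ + L⁻Ψˡ ≤ 0; i.e., the convex restriction is nonempty and contains the nominal point u⁰. 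-/
open Matrix

/-!
Since `M ψ(Cx⁰, u⁰) = f(x⁰, u⁰) = 0`, the matrix `K = -A (MΛC)⁻¹ M` annihilates `ψ(Cx⁰, u⁰)`
and sends `-ΛCx⁰` to `A (MΛC)⁻¹ (MΛC) x⁰ = A x⁰`, so `K g(Cx⁰, u⁰) = A x⁰`. Splitting a matrix
into its positive and negative parts does not change its action on a vector, which turns this
equation and `L ψ(Cx⁰, u⁰) = h(x⁰, u⁰) ≤ 0` into the two envelope inequalities. Finally
`A x ≤ A x⁰` with `A = [C; -C]` forces `Cx = Cx⁰`, hence `x = x⁰` as `C` has full column rank.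
-/

namespace Matrix

variable {l m n p q R : Type*}

theorem mulVec_injective_of_rank_eq_card [Field R] [Fintype m] [Fintype n]
    (C : Matrix m n R) (hC : C.rank = Fintype.card n) : Function.Injective C.mulVec :=
  mulVec_injective_iff.mpr <| linearIndependent_iff_card_eq_finrank_span.mpr <| by
    rw [← hC, rank_eq_finrank_span_cols]
    rfl

section Ordered

variable [Ring R] [PartialOrder R] [IsOrderedAddMonoid R] [Fintype n]

theorem fromRows_neg_mulVec_le_iff (C : Matrix m n R) (x y : n → R) :
    (∀ i, (fromRows C (-C) *ᵥ x) i ≤ (fromRows C (-C) *ᵥ y) i) ↔ C *ᵥ x = C *ᵥ y := by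
  simp only [fromRows_mulVec, Sum.forall, Sum.elim_inl, Sum.elim_inr, neg_mulVec, Pi.neg_apply,
    neg_le_neg_iff, le_antisymm_iff, Pi.le_def]

theorem setOf_fromRows_neg_mulVec_le_eq_singleton {C : Matrix m n R}
    (hC : Function.Injective C.mulVec) (y : n → R) :
    {x | ∀ i, (fromRows C (-C) *ᵥ x) i ≤ (fromRows C (-C) *ᵥ y) i} = {y} :=
  Set.ext fun x => (fromRows_neg_mulVec_le_iff C x y).trans hC.eq_iff

end Ordered

theorem mulVec_add_mulVec_eq_of_max_min [NonUnitalNonAssocSemiring R] [LinearOrder R]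
    [Fintype n] {K Kpos Kneg : Matrix m n R} (hpos : ∀ i j, Kpos i j = max (K i j) 0)
    (hneg : ∀ i j, Kneg i j = min (K i j) 0) (v : n → R) :
    Kpos *ᵥ v + Kneg *ᵥ v = K *ᵥ v := by
  rw [← add_mulVec]
  congr
  ext i j
  rw [add_apply, hpos, hneg, max_add_min, add_zero]

theorem neg_mul_nonsing_inv_mul_mulVec_sub_of_mulVec_eq_zero [CommRing R] [Fintype n]
    [DecidableEq n] [Fintype p] [Fintype q] (A : Matrix l n R) {M : Matrix n p R}
    (Λ : Matrix p q R) (C : Matrix q n R) (hinv : IsUnit (M * Λ * C).det) {v : p → R}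
    (hv : M *ᵥ v = 0) (x : n → R) :
    -(A * (M * Λ * C)⁻¹ * M) *ᵥ (v - Λ *ᵥ (C *ᵥ x)) = A *ᵥ x := by
  have hkill : (A * (M * Λ * C)⁻¹ * M) *ᵥ v = 0 := by
    rw [← mulVec_mulVec, hv, mulVec_zero]
  have hrecover : (A * (M * Λ * C)⁻¹ * M) *ᵥ (Λ *ᵥ (C *ᵥ x)) = A *ᵥ x := by
    rw [mulVec_mulVec, mulVec_mulVec, Matrix.mul_assoc _ M Λ, Matrix.mul_assoc _ (M * Λ) C,
      Matrix.mul_assoc A, nonsing_inv_mul _ hinv, Matrix.mul_one]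
  rw [neg_mulVec, mulVec_sub, hkill, hrecover, zero_sub, neg_neg]

end Matrix

theorem convex_restriction_nonempty_general {n m p q s : ℕ}
    (M : Matrix (Fin n) (Fin p) ℝ) (L : Matrix (Fin s) (Fin p) ℝ)
    (C : Matrix (Fin q) (Fin n) ℝ) (Λ : Matrix (Fin p) (Fin q) ℝ)
    (hC : C.rank = n) (hinv : IsUnit (M * Λ * C).det)
    (ψ : (Fin q → ℝ) → (Fin m → ℝ) → (Fin p → ℝ))
    (f : (Fin n → ℝ) → (Fin m → ℝ) → (Fin n → ℝ))
    (hf : ∀ x u, f x u = M.mulVec (ψ (C.mulVec x) u))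
    (h : (Fin n → ℝ) → (Fin m → ℝ) → (Fin s → ℝ))
    (hh : ∀ x u, h x u = L.mulVec (ψ (C.mulVec x) u))
    (g : (Fin q → ℝ) → (Fin m → ℝ) → (Fin p → ℝ))
    (hg : ∀ z u, g z u = ψ z u - Λ.mulVec z)
    (A : Matrix (Fin q ⊕ Fin q) (Fin n) ℝ) (hA : A = Matrix.fromRows C (-C))
    (K : Matrix (Fin q ⊕ Fin q) (Fin p) ℝ) (hK : K = -(A * (M * Λ * C)⁻¹ * M))
    (Kpos Kneg : Matrix (Fin q ⊕ Fin q) (Fin p) ℝ)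
    (hKpos : ∀ i j, Kpos i j = max (K i j) 0) (hKneg : ∀ i j, Kneg i j = min (K i j) 0)
    (Lpos Lneg : Matrix (Fin s) (Fin p) ℝ)
    (hLpos : ∀ i j, Lpos i j = max (L i j) 0) (hLneg : ∀ i j, Lneg i j = min (L i j) 0)
    (x0 : Fin n → ℝ) (u0 : Fin m → ℝ)
    (hfeas0 : f x0 u0 = 0) (hineq0 : h x0 u0 ≤ 0) :
    {x : Fin n → ℝ | ∀ i, A.mulVec x i ≤ A.mulVec x0 i} = {x0} ∧
    K.mulVec (g (C.mulVec x0) u0) = A.mulVec x0 ∧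
    L.mulVec (ψ (C.mulVec x0) u0) ≤ 0 ∧
    (∀ i, Kpos.mulVec (g (C.mulVec x0) u0) i + Kneg.mulVec (g (C.mulVec x0) u0) i
        ≤ A.mulVec x0 i) ∧
    (∀ j, Lpos.mulVec (ψ (C.mulVec x0) u0) j + Lneg.mulVec (ψ (C.mulVec x0) u0) j ≤ 0) := by
  have hMψ : M *ᵥ ψ (C *ᵥ x0) u0 = 0 := hf x0 u0 ▸ hfeas0
  have hLψ : L *ᵥ ψ (C *ᵥ x0) u0 ≤ 0 := hh x0 u0 ▸ hineq0
  have hKg : K *ᵥ g (C *ᵥ x0) u0 = A *ᵥ x0 := by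
    rw [hK, hg]
    exact neg_mul_nonsing_inv_mul_mulVec_sub_of_mulVec_eq_zero A Λ C hinv hMψ x0
  have hCinj : Function.Injective C.mulVec :=
    mulVec_injective_of_rank_eq_card C (hC.trans (Fintype.card_fin n).symm)
  refine ⟨hA ▸ setOf_fromRows_neg_mulVec_le_eq_singleton hCinj x0, hKg, hLψ,
    fun i => ?_, fun j => ?_⟩
  · rw [← Pi.add_apply, mulVec_add_mulVec_eq_of_max_min hKpos hKneg, hKg]
  · rw [← Pi.add_apply, mulVec_add_mulVec_eq_of_max_min hLpos hLneg]
    exact hLψ j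

/-- First part of Lemma 3.4 (Non-emptiness of Convex Restriction): if `(x⁰,u⁰)` is a
nominal feasible point, then with `b⁰ = A x⁰` we get `P(b⁰) = {x⁰}`, `K g(Cx⁰,u⁰) = b⁰`,
`L ψ(Cx⁰,u⁰) ≤ 0`, and the convex restriction conditions hold with the trivial envelopes
`Gᵘ = Gˡ = g(Cx⁰,u⁰)` and `Ψᵘ = Ψˡ = ψ(Cx⁰,u⁰)`. -/
theorem convex_restriction_nonempty {n m p q s : ℕ}
    (hn : 0 < n) (hm : 0 < m) (hp : 0 < p) (hq : 0 < q) (hs : 0 < s)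
    (M : Matrix (Fin n) (Fin p) ℝ) (L : Matrix (Fin s) (Fin p) ℝ)
    (C : Matrix (Fin q) (Fin n) ℝ) (Λ : Matrix (Fin p) (Fin q) ℝ)
    (hC : C.rank = n) (hinv : IsUnit (M * Λ * C).det)
    (ψ : (Fin q → ℝ) → (Fin m → ℝ) → (Fin p → ℝ))
    (hψ : Continuous fun zu : (Fin q → ℝ) × (Fin m → ℝ) => ψ zu.1 zu.2)
    (f : (Fin n → ℝ) → (Fin m → ℝ) → (Fin n → ℝ))
    (hf : ∀ x u, f x u = M.mulVec (ψ (C.mulVec x) u))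
    (h : (Fin n → ℝ) → (Fin m → ℝ) → (Fin s → ℝ))
    (hh : ∀ x u, h x u = L.mulVec (ψ (C.mulVec x) u))
    (g : (Fin q → ℝ) → (Fin m → ℝ) → (Fin p → ℝ))
    (hg : ∀ z u, g z u = ψ z u - Λ.mulVec z)
    (A : Matrix (Fin q ⊕ Fin q) (Fin n) ℝ) (hA : A = Matrix.fromRows C (-C))
    (K : Matrix (Fin q ⊕ Fin q) (Fin p) ℝ) (hK : K = -(A * (M * Λ * C)⁻¹ * M))
    (Kpos Kneg : Matrix (Fin q ⊕ Fin q) (Fin p) ℝ)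
    (hKpos : ∀ i j, Kpos i j = max (K i j) 0) (hKneg : ∀ i j, Kneg i j = min (K i j) 0)
    (Lpos Lneg : Matrix (Fin s) (Fin p) ℝ)
    (hLpos : ∀ i j, Lpos i j = max (L i j) 0) (hLneg : ∀ i j, Lneg i j = min (L i j) 0)
    (x0 : Fin n → ℝ) (u0 : Fin m → ℝ)
    (hfeas0 : f x0 u0 = 0) (hineq0 : h x0 u0 ≤ 0) :
    {x : Fin n → ℝ | ∀ i, A.mulVec x i ≤ A.mulVec x0 i} = {x0} ∧
    K.mulVec (g (C.mulVec x0) u0) = A.mulVec x0 ∧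
    L.mulVec (ψ (C.mulVec x0) u0) ≤ 0 ∧
    (∀ i, Kpos.mulVec (g (C.mulVec x0) u0) i + Kneg.mulVec (g (C.mulVec x0) u0) i
        ≤ A.mulVec x0 i) ∧
    (∀ j, Lpos.mulVec (ψ (C.mulVec x0) u0) j + Lneg.mulVec (ψ (C.mulVec x0) u0) j ≤ 0) :=
  convex_restriction_nonempty_general M L C Λ hC hinv ψ f hf h hh g hg A hA K hK Kpos Kneg hKpos
    hKneg Lpos Lneg hLpos hLneg x0 u0 hfeas0 hineq0
end

section
/- Let F ∈ ℝ^{n×n} be invertible, φ : ℝ^m → ℝ^n, and h : ℝ^n × ℝ^m → ℝ^s with each component hₖ(·,u) convex in x for every u, and let Iₖ ⊆ {1,…,n} be such that hₖ(x,u) = hₖ(x',u) whenever xᵢ = x'ᵢ for all i ∈ Iₖ. Fix u ∈ ℝ^m. Then the following are equivalent: (i) there exists x ∈ ℝ^n with Fx + φ(u) = 0 and h(x,u) ≤ 0; (ii) there exist z^ℓ, z^u ∈ ℝ^n with z^ℓ ≤ −F^{−1}φ(u) ≤ z^u such that for every k ∈ {1,…,s} and every z ∈ ℝ^n with zᵢ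 ∈ {z^ℓᵢ, z^uᵢ} for all i ∈ Iₖ and zⱼ = z^ℓⱼ for j ∉ Iₖ, one has hₖ(z,u) ≤ 0. -/
open Matrix

/-!
The equality constraint has the unique solution `x₀ = -F⁻¹ φ(u)`, so (i) says `h(x₀, u) ≤ 0`
and gives (ii) with `zˡ = zᵘ = x₀`. Conversely, since `hₖ(·, u)` only sees the coordinates in
`Iₖ`, we may replace `x₀` by the point agreeing with `x₀` on `Iₖ` and with `zˡ` elsewhere. That
point lies in the box with lower corner `zˡ` and upper corner `zᵘ` on `Iₖ`, `zˡ` off `Iₖ`; the box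
is the convex hull of its vertices, which are exactly the points `z` of (ii), and a convex function
attains its maximum over a convex hull at one of the generating points.
-/

theorem Matrix.mulVec_add_eq_zero_iff {ι R : Type*} [Fintype ι] [DecidableEq ι] [CommRing R]
    {A : Matrix ι ι R} (hA : IsUnit A.det) {x c : ι → R} :
    A *ᵥ x + c = 0 ↔ x = -(A⁻¹ *ᵥ c) := by
  rw [add_eq_zero_iff_eq_neg]
  constructor
  · intro hx
    rw [← mulVec_neg, ← hx, mulVec_mulVec, nonsing_inv_mul _ hA, one_mulVec]
  · rintro rfl
    rw [mulVec_neg, mulVec_mulVec, mul_nonsing_inv _ hA, one_mulVec]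

section Box

variable {ι 𝕜 : Type*} [Finite ι] [Field 𝕜] [LinearOrder 𝕜] [IsStrictOrderedRing 𝕜]

theorem Set.Icc_subset_convexHull_pi_pair (a b : ι → 𝕜) :
    Set.Icc a b ⊆ convexHull 𝕜 (Set.univ.pi fun i => {a i, b i}) := by
  intro x ⟨hax, hxb⟩
  refine mem_convexHull_pi fun i _ => ?_
  rw [convexHull_pair, segment_eq_Icc ((hax i).trans (hxb i))]
  exact ⟨hax i, hxb i⟩

theorem ConvexOn.exists_vertex_ge_of_mem_Icc {β : Type*} [AddCommGroup β] [LinearOrder β]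
    [IsOrderedAddMonoid β] [Module 𝕜 β] [IsStrictOrderedModule 𝕜 β] {a b x : ι → 𝕜} {f : (ι → 𝕜) → β}
    (hf : ConvexOn 𝕜 (Set.Icc a b) f) (hx : x ∈ Set.Icc a b) :
    ∃ z ∈ Set.univ.pi (fun i => ({a i, b i} : Set 𝕜)), f x ≤ f z := by
  have hab : a ≤ b := hx.1.trans hx.2
  refine hf.exists_ge_of_mem_convexHull ?_ (Set.Icc_subset_convexHull_pi_pair a b hx)
  intro z hz
  constructor <;> intro i <;> obtain hzi | hzi : z i = a i ∨ z i = b i := hz i trivial <;>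
    simp [hzi, hab i]

end Box

/-- Corollary 3.5 (Equivalence for Convex Constraints): when the equality constraint
`Fx + φ(u) = 0` is linear in `x` and each inequality constraint `hₖ(·,u)` is convex and
depends only on the coordinates in `Iₖ`, feasibility is equivalent to the convex
restriction condition. -/
theorem convex_restriction_equivalence {n m s : ℕ}
    (F : Matrix (Fin n) (Fin n) ℝ) (hF : IsUnit F.det)
    (φ : (Fin m → ℝ) → (Fin n → ℝ))
    (h : (Fin n → ℝ) → (Fin m → ℝ) → (Fin s → ℝ))
    (hconv : ∀ k u, ConvexOn ℝ Set.univ (fun x => h x u k))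
    (I : Fin s → Set (Fin n))
    (hsp : ∀ k u, ∀ x x' : Fin n → ℝ, (∀ i ∈ I k, x i = x' i) → h x u k = h x' u k)
    (u : Fin m → ℝ) :
    (∃ x, F.mulVec x + φ u = 0 ∧ h x u ≤ 0) ↔
    (∃ zl zu : Fin n → ℝ,
      (zl ≤ -(F⁻¹.mulVec (φ u)) ∧ -(F⁻¹.mulVec (φ u)) ≤ zu) ∧
      ∀ k, ∀ z : Fin n → ℝ,
        ((∀ i ∈ I k, z i = zl i ∨ z i = zu i) ∧ ∀ j ∉ I k, z j = zl j) →
        h z u k ≤ 0) := by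
  classical
  simp_rw [mulVec_add_eq_zero_iff hF, exists_eq_left]
  set x₀ := -(F⁻¹ *ᵥ φ u)
  constructor
  · intro hx₀
    refine ⟨x₀, x₀, ⟨le_rfl, le_rfl⟩, fun k z ⟨hzI, hzIc⟩ => ?_⟩
    have hz : z = x₀ := funext fun i => by
      by_cases hi : i ∈ I k
      · exact (hzI i hi).elim id id
      · exact hzIc i hi
    exact hz ▸ hx₀ k
  · rintro ⟨zl, zu, ⟨hzl, hzu⟩, hvert⟩ k
    have hx' : (I k).piecewise x₀ zl ∈ Set.Icc zl ((I k).piecewise zu zl) := by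
      constructor <;> intro i <;> by_cases hi : i ∈ I k <;> simp [hi, hzl i, hzu i]
    obtain ⟨z, hz, hle⟩ := ((hconv k u).subset (Set.subset_univ _) (convex_Icc _ _))
      |>.exists_vertex_ge_of_mem_Icc hx'
    rw [hsp k u x₀ _ fun i hi => (Set.piecewise_eq_of_mem _ _ _ hi).symm]
    refine hle.trans (hvert k z ⟨fun i hi => ?_, fun j hj => ?_⟩)
    · simpa [hi] using hz i trivial
    · simpa [hj] using hz j trivial
end

section
/- Fix u ∈ ℝ^m and b ∈ ℝ^{2q} with P(b) nonempty, and define G : ℝ^n → ℝ^n by G(x) = −(MΛC)^{−1} M g(Cx, u). Suppose G maps P(b) into P(b). Let x₀ ∈ P(b) and define the sequence x_{k+1} = G(x_k). If x_k converges to a point x*, then x* ∈ P(b) and f(x*, u) = 0. If moreover Ψᵘ, Ψˡ ∈ ℝ^p satisfy Ψˡₖ ≤ ψₖ(Cx,u) ≤ Ψᵘₖ for all x ∈ P(b) and L⁺Ψᵘ + L⁻Ψˡ ≤ 0, then also h(x*, u) ≤ 0. -/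
open Matrix

/-- Remark 3.2 (Retrieval of Implicit Variable): if the fixed-point iteration
`x_{k+1} = G(x_k) = -(MΛC)⁻¹ M g(Cx_k, u)`, started inside the self-mapping polytope
`P(b)`, converges to `x*`, then `x* ∈ P(b)` and `f(x*,u) = 0`; and under the envelope
condition `L⁺Ψᵘ + L⁻Ψˡ ≤ 0` also `h(x*,u) ≤ 0`. -/
theorem retrieval_of_implicit_variable {n m p q s : ℕ}
    (hn : 0 < n) (hm : 0 < m) (hp : 0 < p) (hq : 0 < q) (hs : 0 < s)
    (M : Matrix (Fin n) (Fin p) ℝ) (L : Matrix (Fin s) (Fin p) ℝ)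
    (C : Matrix (Fin q) (Fin n) ℝ) (Λ : Matrix (Fin p) (Fin q) ℝ)
    (hC : C.rank = n) (hinv : IsUnit (M * Λ * C).det)
    (ψ : (Fin q → ℝ) → (Fin m → ℝ) → (Fin p → ℝ))
    (hψ : Continuous fun zu : (Fin q → ℝ) × (Fin m → ℝ) => ψ zu.1 zu.2)
    (f : (Fin n → ℝ) → (Fin m → ℝ) → (Fin n → ℝ))
    (hf : ∀ x u, f x u = M.mulVec (ψ (C.mulVec x) u))
    (h : (Fin n → ℝ) → (Fin m → ℝ) → (Fin s → ℝ))
    (hh : ∀ x u, h x u = L.mulVec (ψ (C.mulVec x) u))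
    (g : (Fin q → ℝ) → (Fin m → ℝ) → (Fin p → ℝ))
    (hg : ∀ z u, g z u = ψ z u - Λ.mulVec z)
    (A : Matrix (Fin q ⊕ Fin q) (Fin n) ℝ) (hA : A = Matrix.fromRows C (-C))
    (Lpos Lneg : Matrix (Fin s) (Fin p) ℝ)
    (hLpos : ∀ i j, Lpos i j = max (L i j) 0) (hLneg : ∀ i j, Lneg i j = min (L i j) 0)
    (u : Fin m → ℝ) (b : Fin q ⊕ Fin q → ℝ)
    (P : Set (Fin n → ℝ)) (hP : P = {x | ∀ i, A.mulVec x i ≤ b i})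
    (hPne : P.Nonempty)
    (G : (Fin n → ℝ) → (Fin n → ℝ))
    (hG : ∀ x, G x = -((M * Λ * C)⁻¹.mulVec (M.mulVec (g (C.mulVec x) u))))
    (hself : ∀ x ∈ P, G x ∈ P)
    (x0 : Fin n → ℝ) (hx0 : x0 ∈ P)
    (xseq : ℕ → (Fin n → ℝ)) (hseq0 : xseq 0 = x0)
    (hseq : ∀ k, xseq (k + 1) = G (xseq k))
    (xstar : Fin n → ℝ)
    (hlim : Filter.Tendsto xseq Filter.atTop (nhds xstar)) :
    xstar ∈ P ∧ f xstar u = 0 ∧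
    ∀ Ψu Ψl : Fin p → ℝ,
      (∀ x ∈ P, ∀ k, Ψl k ≤ ψ (C.mulVec x) u k ∧ ψ (C.mulVec x) u k ≤ Ψu k) →
      (∀ j, Lpos.mulVec Ψu j + Lneg.mulVec Ψl j ≤ 0) →
      h xstar u ≤ 0 := by

  have hmem : ∀ k, xseq k ∈ P := by
    intro k; induction k with
    | zero => rw [hseq0]; exact hx0
    | succ k ih => rw [hseq]; exact hself _ ih
  have hmv : ∀ {a c : ℕ} (B : Matrix (Fin a) (Fin c) ℝ),
      Continuous (fun v : Fin c → ℝ => B.mulVec v) := by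
    intro a c B
    refine continuous_pi fun i => ?_
    unfold Matrix.mulVec dotProduct
    exact continuous_finset_sum _ fun j _ => continuous_const.mul (continuous_apply j)
  have hPclosed : IsClosed P := by
    rw [hP]
    have he : {x : Fin n → ℝ | ∀ i, A.mulVec x i ≤ b i}
        = ⋂ i, {x : Fin n → ℝ | A.mulVec x i ≤ b i} := by
      ext x; simp [Set.mem_iInter]
    rw [he]
    refine isClosed_iInter fun i => isClosed_le ?_ continuous_const
    unfold Matrix.mulVec dotProduct
    exact continuous_finset_sum _ fun j _ => continuous_const.mul (continuous_apply j)
  have hxstarP : xstar ∈ P := hPclosed.mem_of_tendsto hlim (Filter.Eventually.of_forall hmem)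
  have hGcont : Continuous G := by
    have h1 : Continuous fun z : Fin q → ℝ => ψ z u :=
      hψ.comp (continuous_id.prodMk continuous_const)
    have hgc : Continuous fun x : Fin n → ℝ => g (C.mulVec x) u := by
      simp only [hg]
      exact (h1.comp (hmv C)).sub ((hmv Λ).comp (hmv C))
    have h2 : Continuous fun x : Fin n → ℝ =>
        -((M * Λ * C)⁻¹.mulVec (M.mulVec (g (C.mulVec x) u))) :=
      ((hmv _).comp ((hmv M).comp hgc)).neg
    convert h2 using 1
    ext x i
    rw [hG]
  have hfix : xstar = G xstar := by
    have h1 : Filter.Tendsto (fun k => xseq (k + 1)) Filter.atTop (nhds xstar) :=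
      hlim.comp (Filter.tendsto_add_atTop_nat 1)
    have h2 : Filter.Tendsto (fun k => G (xseq k)) Filter.atTop (nhds (G xstar)) :=
      (hGcont.tendsto xstar).comp hlim
    have h3 : Filter.Tendsto (fun k => xseq (k + 1)) Filter.atTop (nhds (G xstar)) := by
      simpa [hseq] using h2
    exact tendsto_nhds_unique h1 h3
  have hf0 : f xstar u = 0 := by
    have key : (M * Λ * C).mulVec xstar = -(M.mulVec (g (C.mulVec xstar) u)) := by
      conv_lhs => rw [hfix, hG]
      rw [Matrix.mulVec_neg, Matrix.mulVec_mulVec, Matrix.mul_nonsing_inv _ hinv,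
        Matrix.one_mulVec]
    rw [hg, Matrix.mulVec_sub, neg_sub] at key
    have hmm : (M * Λ * C).mulVec xstar = M.mulVec (Λ.mulVec (C.mulVec xstar)) := by
      rw [← Matrix.mulVec_mulVec, ← Matrix.mulVec_mulVec]
    rw [hmm] at key
    rw [hf]
    exact sub_eq_self.mp key.symm
  refine ⟨hxstarP, hf0, ?_⟩
  intro Ψu Ψl henv hLL
  have hψb := henv xstar hxstarP
  rw [hh]
  intro j
  calc L.mulVec (ψ (C.mulVec xstar) u) j
      ≤ Lpos.mulVec Ψu j + Lneg.mulVec Ψl j := by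
        simp only [Matrix.mulVec, dotProduct]
        rw [← Finset.sum_add_distrib]
        refine Finset.sum_le_sum fun k _ => ?_
        have h1 := (hψb k).1
        have h2 := (hψb k).2
        have hp0 : 0 ≤ Lpos j k := by rw [hLpos]; exact le_max_right _ _
        have hn0 : Lneg j k ≤ 0 := by rw [hLneg]; exact min_le_right _ _
        have hL : L j k = Lpos j k + Lneg j k := by
          rw [hLpos, hLneg, max_add_min, add_zero]
        rw [hL, add_mul]
        have e1 : Lpos j k * ψ (C.mulVec xstar) u k ≤ Lpos j k * Ψu k :=
          mul_le_mul_of_nonneg_left h2 hp0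
        have e2 : Lneg j k * ψ (C.mulVec xstar) u k ≤ Lneg j k * Ψl k :=
          mul_le_mul_of_nonpos_left h1 hn0
        linarith
    _ ≤ 0 := hLL j
end

section
/- Let σ : ℝ → ℝ be the logistic function σ(x) = 1/(1 + e^{−x}). For all x, x⁰ ∈ ℝ: σ(x⁰) + σ(x⁰)(1 − σ(x⁰))(x − x⁰) − (√3/36)(x − x⁰)² ≤ σ(x) ≤ σ(x⁰) + σ(x⁰)(1 − σ(x⁰))(x − x⁰) + (√3/36)(x − x⁰)². -/
/-!
The logistic function satisfies `σ' = σ (1 - σ)` and `σ'' = σ (1 - σ) (1 - 2σ)`. Writing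
`u = 1 - 2σ ∈ [-1, 1]`, the second derivative is `u (1 - u²) / 4`, whose absolute value is at most
`√3 / 18` (attained at `u = ±1/√3`). For any `f` with `m ≤ f''`, the function
`f t - f' x⁰ (t - x⁰) - m/2 (t - x⁰)²` is convex with vanishing derivative at `x⁰`, hence minimal
there; this gives both quadratic estimators, with `m = ∓√3/18`.
-/

open Real Set

theorem tangent_add_sq_le_of_le_deriv2 {f f' f'' : ℝ → ℝ} {m : ℝ}
    (hf : ∀ t, HasDerivAt f (f' t) t) (hf' : ∀ t, HasDerivAt f' (f'' t) t)
    (hm : ∀ t, m ≤ f'' t) (x₀ x : ℝ) :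
    f x₀ + f' x₀ * (x - x₀) + m / 2 * (x - x₀) ^ 2 ≤ f x := by
  set g : ℝ → ℝ := fun t ↦ f t - f' x₀ * (t - x₀) - m / 2 * (t - x₀) ^ 2
  have hg : ∀ t, HasDerivAt g (f' t - f' x₀ - m * (t - x₀)) t := fun t ↦ by
    refine (((hf t).fun_sub (((hasDerivAt_id' t).sub_const x₀).const_mul (f' x₀))).fun_sub
      ((((hasDerivAt_id' t).sub_const x₀).fun_pow 2).const_mul (m / 2))).congr_deriv ?_
    push_cast
    ring
  have hg' : ∀ t, HasDerivAt (fun t ↦ f' t - f' x₀ - m * (t - x₀)) (f'' t - m) t := fun t ↦ by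
    simpa using ((hf' t).sub_const (f' x₀)).fun_sub (((hasDerivAt_id' t).sub_const x₀).const_mul m)
  have hconvex : ConvexOn ℝ univ g :=
    convexOn_of_hasDerivWithinAt2_nonneg convex_univ
      (continuous_iff_continuousAt.2 fun t ↦ (hg t).continuousAt).continuousOn
      (fun t _ ↦ (hg t).hasDerivWithinAt) (fun t _ ↦ (hg' t).hasDerivWithinAt)
      (fun t _ ↦ sub_nonneg.2 (hm t))
  have hmin : IsMinOn g univ x₀ := by
    refine hconvex.isMinOn_of_rightDeriv_eq_zero (by simp) ?_
    rw [(hg x₀).hasDerivWithinAt.derivWithin (uniqueDiffWithinAt_Ioi x₀)]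
    ring
  have hx : g x₀ ≤ g x := hmin (mem_univ x)
  simp only [g, sub_self, zero_pow two_ne_zero, mul_zero, sub_zero] at hx
  linarith

theorem abs_sub_tangent_le_of_abs_deriv2_le {f f' f'' : ℝ → ℝ} {M : ℝ}
    (hf : ∀ t, HasDerivAt f (f' t) t) (hf' : ∀ t, HasDerivAt f' (f'' t) t)
    (hM : ∀ t, |f'' t| ≤ M) (x₀ x : ℝ) :
    |f x - (f x₀ + f' x₀ * (x - x₀))| ≤ M / 2 * (x - x₀) ^ 2 := by
  have lower := tangent_add_sq_le_of_le_deriv2 hf hf' (fun t ↦ neg_le_of_abs_le (hM t)) x₀ x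
  have upper := tangent_add_sq_le_of_le_deriv2 (fun t ↦ (hf t).neg) (fun t ↦ (hf' t).neg)
    (fun t ↦ neg_le_neg (le_of_abs_le (hM t))) x₀ x
  simp only [Pi.neg_apply] at upper
  rw [abs_le]
  constructor <;> linarith

theorem abs_mul_one_sub_mul_one_sub_two_mul_le {s : ℝ} (hs₀ : 0 ≤ s) (hs₁ : s ≤ 1) :
    |s * (1 - s) * (1 - 2 * s)| ≤ √3 / 18 := by
  set v := (1 - 2 * s) ^ 2
  have hv : v ≤ 1 := by nlinarith
  -- `27 v (1 - v)² - 4 = (3v - 1)² (3v - 4)`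
  have hsq : (s * (1 - s) * (1 - 2 * s)) ^ 2 ≤ (√3 / 18) ^ 2 := by
    rw [div_pow, sq_sqrt zero_le_three]
    nlinarith [mul_nonneg (sq_nonneg (3 * v - 1)) (by linarith : 0 ≤ 4 - 3 * v)]
  exact abs_le_of_sq_le_sq hsq (by positivity)

namespace Real

theorem hasDerivAt_sigmoid_mul_one_sub_sigmoid (x : ℝ) :
    HasDerivAt (fun x ↦ sigmoid x * (1 - sigmoid x))
      (sigmoid x * (1 - sigmoid x) * (1 - 2 * sigmoid x)) x :=
  ((hasDerivAt_sigmoid x).fun_mul ((hasDerivAt_sigmoid x).const_sub 1)).congr_deriv (by ring)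

theorem abs_deriv2_sigmoid_le (x : ℝ) :
    |sigmoid x * (1 - sigmoid x) * (1 - 2 * sigmoid x)| ≤ √3 / 18 :=
  abs_mul_one_sub_mul_one_sub_two_mul_le (sigmoid_nonneg x) (sigmoid_le_one x)

end Real

/-- Concave envelope for the logistic function (Appendix A.4): quadratic over- and
under-estimators of `σ(x) = 1/(1 + e^{−x})`, valid for all `x`, tight at `x⁰`. -/
theorem logistic_concave_envelope (σ : ℝ → ℝ)
    (hσ : ∀ x, σ x = 1 / (1 + Real.exp (-x))) (x x0 : ℝ) :
    σ x0 + σ x0 * (1 - σ x0) * (x - x0) - (Real.sqrt 3 / 36) * (x - x0) ^ 2 ≤ σ x ∧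
    σ x ≤ σ x0 + σ x0 * (1 - σ x0) * (x - x0) + (Real.sqrt 3 / 36) * (x - x0) ^ 2 := by
  obtain rfl : σ = sigmoid := funext fun t ↦ (hσ t).trans (one_div _)
  have h := abs_sub_tangent_le_of_abs_deriv2_le hasDerivAt_sigmoid
    hasDerivAt_sigmoid_mul_one_sub_sigmoid abs_deriv2_sigmoid_le x0 x
  rw [abs_le, show √3 / 18 / 2 = √3 / 36 by ring] at h
  constructor <;> linarith
end
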